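/- Let M be a real m-dimensional C^1 manifold, x a point of M, and f_1, ..., f_m complex-valued C^1 functions on a neighborhood U of x such that f = (f_1, ..., f_m) : U → C^m is an embedding. Then the complex dimension of the complex tangent space H_{f(x)}f(U) to the submanifold f(U) of C^m at f(x) equals m minus the complex dimension of the span of {df_1(x), ..., df_m(x)} in the complexified cotangent space of M at x. -/

import Mathlib

/-!
Let `L = df_x : ℝᵐ → ℂᵐ`, injective, with image `T`. The differentials `df_i(x)` are the
coordinates of the complexification `L_ℂ : ℂᵐ → ℂᵐ`, so they span a space of dimension
`rank L_ℂ`, and the image of `L_ℂ` is the complex span `T + iT` of `T`. As real spaces,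
`dim (T + iT) + dim (T ∩ iT) = dim T + dim iT = 2m`, and both `T + iT` and `T ∩ iT` are complex,
so `dim_ℂ (T ∩ iT) = m - rank L_ℂ`.
-/

open Module Submodule
open scoped Pointwise Manifold

section ComplexSpan

variable {V : Type*} [AddCommGroup V] [Module ℂ V]

theorem Submodule.I_smul_mem_sup_I_smul {T : Submodule ℝ V} {v : V} (hv : v ∈ T ⊔ Complex.I • T) :
    Complex.I • v ∈ T ⊔ Complex.I • T := by
  obtain ⟨t, ht, _, ⟨s, hs, rfl⟩, rfl⟩ := mem_sup.1 hv
  change Complex.I • (t + Complex.I • s) ∈ _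
  have hrot : Complex.I • (t + Complex.I • s) = (-1 : ℝ) • s + Complex.I • t := by
    rw [smul_add, smul_smul, Complex.I_mul_I, add_comm, ← Complex.coe_smul]
    simp
  rw [hrot]
  exact add_mem (mem_sup_left (smul_mem _ _ hs)) (mem_sup_right (smul_mem_pointwise_smul _ _ _ ht))

theorem Submodule.restrictScalars_span_complex (T : Submodule ℝ V) :
    (span ℂ (T : Set V)).restrictScalars ℝ = T ⊔ Complex.I • T := by
  apply le_antisymm
  · intro v hv
    induction hv using Submodule.span_induction with
    | mem v hv => exact mem_sup_left hv
    | zero => exact zero_mem _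
    | add u w _ _ hu hw => exact add_mem hu hw
    | smul c v _ hv =>
      rw [← c.re_add_im, add_smul, mul_smul, Complex.coe_smul, Complex.coe_smul]
      exact add_mem (smul_mem _ _ hv) (smul_mem _ _ (I_smul_mem_sup_I_smul hv))
  · exact sup_le (fun v hv => subset_span hv) (by
      rintro _ ⟨v, hv, rfl⟩
      exact smul_mem _ Complex.I (subset_span hv))

theorem Submodule.finrank_restrictScalars_real (W : Submodule ℂ V) :
    finrank ℝ (W.restrictScalars ℝ) = 2 * finrank ℂ W :=
  ((restrictScalarsEquiv ℝ ℂ V W).restrictScalars ℝ).finrank_eq.trans (finrank_real_of_complex W)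

theorem Submodule.finrank_I_smul (T : Submodule ℝ V) :
    finrank ℝ (Complex.I • T : Submodule ℝ V) = finrank ℝ T :=
  (equivMapOfInjective _ (smul_right_injective V Complex.I_ne_zero) T).finrank_eq.symm

theorem Submodule.finrank_add_finrank_span_complex [FiniteDimensional ℂ V] (T : Submodule ℝ V)
    (H : Submodule ℂ V) (hH : (H : Set V) = (T : Set V) ∩ (Complex.I • T : Submodule ℝ V)) :
    finrank ℂ H + finrank ℂ (span ℂ (T : Set V)) = finrank ℝ T := by
  have hHinf : H.restrictScalars ℝ = T ⊓ Complex.I • T := SetLike.ext' hH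
  have key := finrank_sup_add_finrank_inf_eq T (Complex.I • T)
  rw [← restrictScalars_span_complex, ← hHinf, finrank_restrictScalars_real,
    finrank_restrictScalars_real, finrank_I_smul] at key
  omega

end ComplexSpan

theorem Module.Dual.finrank_span_range_eq_finrank_range_pi {K V ι : Type*} [Field K]
    [AddCommGroup V] [Module K V] [Finite ι] (φ : ι → Module.Dual K V) :
    finrank K (span K (Set.range φ)) = finrank K (LinearMap.range (LinearMap.pi φ)) := by
  classical
  have hproj : ⇑(Pi.basisFun K ι).dualBasis = fun i => LinearMap.proj i := by
    ext i v; simp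
  have hspan : span K (Set.range φ) = LinearMap.range (LinearMap.pi φ).dualMap := by
    rw [LinearMap.range_eq_map, ← (Pi.basisFun K ι).dualBasis.span_eq, map_span, ← Set.range_comp,
      hproj]
    rfl
  rw [hspan, LinearMap.finrank_range_dualMap_eq_finrank_range]

theorem LinearMap.range_eq_span_range_of_basis {R A ι V₁ V₂ W : Type*} [CommRing R] [Ring A]
    [Algebra R A] [AddCommGroup W] [Module R W] [Module A W] [IsScalarTower R A W]
    [AddCommGroup V₁] [Module R V₁] [AddCommGroup V₂] [Module A V₂]
    (b₁ : Basis ι R V₁) (b₂ : Basis ι A V₂) (L : V₁ →ₗ[R] W) (L' : V₂ →ₗ[A] W)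
    (h : ∀ k, L' (b₂ k) = L (b₁ k)) :
    LinearMap.range L' = span A (LinearMap.range L : Set W) := by
  rw [LinearMap.range_eq_map, ← b₂.span_eq, map_span, LinearMap.range_eq_map, ← b₁.span_eq, map_span,
    span_span_of_tower, ← Set.range_comp, ← Set.range_comp]
  exact congrArg _ (congrArg Set.range (funext h))

theorem MDifferentiableAt.mfderiv_apply_component {E H M F ι : Type*} [NormedAddCommGroup E]
    [NormedSpace ℝ E] [TopologicalSpace H] {I : ModelWithCorners ℝ E H} [TopologicalSpace M]
    [ChartedSpace H M] [NormedAddCommGroup F] [NormedSpace ℝ F] [Fintype ι] {f : M → ι → F}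
    {x : M} (hf : MDifferentiableAt I 𝓘(ℝ, ι → F) f x) (i : ι) (v : TangentSpace I x) :
    mfderiv I 𝓘(ℝ, F) (fun y => f y i) x v = mfderiv I 𝓘(ℝ, ι → F) f x v i := by
  have hproj := (ContinuousLinearMap.proj (R := ℝ) (φ := fun _ : ι => F) i).hasMFDerivAt (x := f x)
  rw [show (fun y => f y i) = (ContinuousLinearMap.proj i : (ι → F) →L[ℝ] F) ∘ f from rfl,
    (hproj.comp x hf.hasMFDerivAt).mfderiv]
  rfl

theorem stmt_1_general {m : ℕ} {M : Type*} [TopologicalSpace M]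
    [ChartedSpace (EuclideanSpace ℝ (Fin m)) M]
    (x : M) (U : Set M) (hU : IsOpen U) (hx : x ∈ U)
    (f : M → (Fin m → ℂ))
    (hf : ContMDiffOn (𝓡 m) 𝓘(ℝ, Fin m → ℂ) 1 f U)
    (himm : ∀ y ∈ U, Function.Injective (mfderiv (𝓡 m) 𝓘(ℝ, Fin m → ℂ) f y))
    -- the tangent space `T = T_{f x} f(U) ⊆ ℂᵐ`, as a real subspace
    (T : Submodule ℝ (Fin m → ℂ))
    (hT : T = LinearMap.range (mfderiv (𝓡 m) 𝓘(ℝ, Fin m → ℂ) f x).toLinearMap)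
    -- the complex tangent space `H_{f x} f(U) = T ∩ i T`, a complex subspace
    (H : Submodule ℂ (Fin m → ℂ))
    (hH : (H : Set (Fin m → ℂ)) =
      (T : Set (Fin m → ℂ)) ∩
        ((T.map ((Complex.I • (LinearMap.id : (Fin m → ℂ) →ₗ[ℂ] (Fin m → ℂ))).restrictScalars ℝ)) :
          Set (Fin m → ℂ)))
    -- the differentials `df_i(x)`, complex-linearly extended to the complexified
    -- (co)tangent space `EuclideanSpace ℂ (Fin m)` of `M` at `x`
    (df : Fin m → Module.Dual ℂ (EuclideanSpace ℂ (Fin m)))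
    (hdf : ∀ i (v : EuclideanSpace ℂ (Fin m)),
      df i v = ∑ k, v k *
        (show ℂ from (mfderiv (𝓡 m) 𝓘(ℝ, ℂ) (fun y => f y i) x)
          (EuclideanSpace.single k 1))) :
    Module.finrank ℂ H =
      m - Module.finrank ℂ (Submodule.span ℂ (Set.range df)) := by
  set L : EuclideanSpace ℝ (Fin m) →ₗ[ℝ] (Fin m → ℂ) :=
    (mfderiv (𝓡 m) 𝓘(ℝ, Fin m → ℂ) f x).toLinearMap
  have hfx : MDifferentiableAt (𝓡 m) 𝓘(ℝ, Fin m → ℂ) f x :=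
    (hf.contMDiffAt (hU.mem_nhds hx)).mdifferentiableAt one_ne_zero
  have hcoord : ∀ i (v : EuclideanSpace ℝ (Fin m)),
      mfderiv (𝓡 m) 𝓘(ℝ, ℂ) (fun y => f y i) x v = L v i :=
    hfx.mfderiv_apply_component
  have hbasis : ∀ k, LinearMap.pi df (EuclideanSpace.basisFun (Fin m) ℂ k) =
      L (EuclideanSpace.basisFun (Fin m) ℝ k) := by
    intro k
    ext i
    simp [hdf, hcoord, PiLp.single_apply]
  have hrange : LinearMap.range (LinearMap.pi df) = span ℂ (T : Set (Fin m → ℂ)) := by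
    rw [hT]
    exact LinearMap.range_eq_span_range_of_basis (EuclideanSpace.basisFun (Fin m) ℝ).toBasis
      (EuclideanSpace.basisFun (Fin m) ℂ).toBasis L _ (by simpa using hbasis)
  have hTm : finrank ℝ T = m := by
    rw [hT]
    exact (LinearMap.finrank_range_of_inj (himm x hx)).trans finrank_euclideanSpace_fin
  have hdim := finrank_add_finrank_span_complex T H hH
  rw [Module.Dual.finrank_span_range_eq_finrank_range_pi, hrange]
  omega

/-- Let `M` be a real `m`-dimensional `C¹` manifold, `x ∈ M`, and
`f = (f_1, …, f_m) : U → ℂᵐ` a `C¹` embedding of a neighborhood `U` of `x`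
(injective immersion and topological embedding).  Then the complex dimension of the
complex tangent space `H_{f x} f(U) = T ∩ i T` (where `T = range (d f)_x` is the
tangent space of the submanifold `f(U)` of `ℂᵐ` at `f x`) equals `m` minus the
complex dimension of the span of the differentials `df_1(x), …, df_m(x)`, regarded
(via their complex-linear extensions) as elements of the complexified cotangent
space of `M` at `x`. -/
theorem stmt_1 {m : ℕ} {M : Type*} [TopologicalSpace M]
    [ChartedSpace (EuclideanSpace ℝ (Fin m)) M]
    [HasGroupoid M (contDiffGroupoid 1 (𝓡 m))]
    (x : M) (U : Set M) (hU : IsOpen U) (hx : x ∈ U)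
    (f : M → (Fin m → ℂ))
    (hf : ContMDiffOn (𝓡 m) 𝓘(ℝ, Fin m → ℂ) 1 f U)
    (himm : ∀ y ∈ U, Function.Injective (mfderiv (𝓡 m) 𝓘(ℝ, Fin m → ℂ) f y))
    (hemb : Topology.IsEmbedding (U.restrict f))
    -- the tangent space `T = T_{f x} f(U) ⊆ ℂᵐ`, as a real subspace
    (T : Submodule ℝ (Fin m → ℂ))
    (hT : T = LinearMap.range (mfderiv (𝓡 m) 𝓘(ℝ, Fin m → ℂ) f x).toLinearMap)
    -- the complex tangent space `H_{f x} f(U) = T ∩ i T`, a complex subspace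
    (H : Submodule ℂ (Fin m → ℂ))
    (hH : (H : Set (Fin m → ℂ)) =
      (T : Set (Fin m → ℂ)) ∩
        ((T.map ((Complex.I • (LinearMap.id : (Fin m → ℂ) →ₗ[ℂ] (Fin m → ℂ))).restrictScalars ℝ)) :
          Set (Fin m → ℂ)))
    -- the differentials `df_i(x)`, complex-linearly extended to the complexified
    -- (co)tangent space `EuclideanSpace ℂ (Fin m)` of `M` at `x`
    (df : Fin m → Module.Dual ℂ (EuclideanSpace ℂ (Fin m)))
    (hdf : ∀ i (v : EuclideanSpace ℂ (Fin m)),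
      df i v = ∑ k, v k *
        (show ℂ from (mfderiv (𝓡 m) 𝓘(ℝ, ℂ) (fun y => f y i) x)
          (EuclideanSpace.single k 1))) :
    Module.finrank ℂ H =
      m - Module.finrank ℂ (Submodule.span ℂ (Set.range df)) :=
  stmt_1_general x U hU hx f hf himm T hT H hH df hdf
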